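/- Let (S,T),(U,V) be a twin cotorsion pair on B, and f : A → B a morphism with A ∈ B⁻. Let c_f : B → C_f be constructed as the push-out of f along the approximation A ↣ W^A ↠ S^A. Then for any object C and any morphism g : B → C whose composite g∘f factors through W, there exists c : C_f → C with c∘c_f = g; moreover if C ∈ B⁺, then c is unique in the quotient category B/W. -/

import Mathlib

/-!
Existence: write `g ∘ f = v ∘ u` with `u : A → Z` and `Z ∈ W ⊆ T`. Pushing `A ↣ W^A ↠ S^A` out
along `u` gives a conflation `Z ↣ M ↠ S^A` (up to isomorphism), which splits since
`Ext¹(S, T) = 0`; so `u` extends to `W^A`, and the push-out property of `C_f` produces `c`.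

Uniqueness: `c - c'` kills `c_f`, hence factors through the deflation `C_f ↠ S^A`. If `C ∈ B⁺`,
with `V' ↣ W' ↠ C`, dually `Ext¹(S^A, V') = 0` (as `S ⊆ U`) lets `S^A → C` lift to `W' ∈ W`.
-/

open CategoryTheory Limits

universe v u

/-- An exact structure (Quillen exact category) on an additive category `C`:
a class of kernel-cokernel pairs (short exact sequences) satisfying Quillen's axioms. -/
structure ExactStructure (C : Type u) [Category.{v} C] [Preadditive C] where
  ses : ∀ ⦃X Y Z : C⦄, (X ⟶ Y) → (Y ⟶ Z) → Prop
  comp_zero : ∀ ⦃X Y Z : C⦄ ⦃i : X ⟶ Y⦄ ⦃d : Y ⟶ Z⦄, ses i d → i ≫ d = 0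
  is_kernel : ∀ ⦃X Y Z : C⦄ ⦃i : X ⟶ Y⦄ ⦃d : Y ⟶ Z⦄, ses i d →
    ∀ ⦃W : C⦄ (g : W ⟶ Y), g ≫ d = 0 → ∃! h : W ⟶ X, h ≫ i = g
  is_cokernel : ∀ ⦃X Y Z : C⦄ ⦃i : X ⟶ Y⦄ ⦃d : Y ⟶ Z⦄, ses i d →
    ∀ ⦃W : C⦄ (g : Y ⟶ W), i ≫ g = 0 → ∃! h : Z ⟶ W, d ≫ h = g
  id_infl : ∀ X : C, ∃ (Z : C) (d : X ⟶ Z), ses (𝟙 X) d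
  id_defl : ∀ X : C, ∃ (W : C) (i : W ⟶ X), ses i (𝟙 X)
  infl_comp : ∀ ⦃X Y Z : C⦄ (i : X ⟶ Y) (j : Y ⟶ Z),
    (∃ (A : C) (d : Y ⟶ A), ses i d) → (∃ (B : C) (e : Z ⟶ B), ses j e) →
    ∃ (A : C) (d : Z ⟶ A), ses (i ≫ j) d
  defl_comp : ∀ ⦃X Y Z : C⦄ (p : X ⟶ Y) (q : Y ⟶ Z),
    (∃ (A : C) (i : A ⟶ X), ses i p) → (∃ (B : C) (j : B ⟶ Y), ses j q) →
    ∃ (A : C) (i : A ⟶ X), ses i (p ≫ q)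
  pullback_defl : ∀ ⦃X Y Z : C⦄ ⦃i : X ⟶ Y⦄ ⦃d : Y ⟶ Z⦄, ses i d → ∀ ⦃Z' : C⦄ (f : Z' ⟶ Z),
    ∃ (Y' : C) (d' : Y' ⟶ Z') (g : Y' ⟶ Y), (∃ (X' : C) (i' : X' ⟶ Y'), ses i' d') ∧
      IsPullback d' g f d
  pushout_infl : ∀ ⦃X Y Z : C⦄ ⦃i : X ⟶ Y⦄ ⦃d : Y ⟶ Z⦄, ses i d → ∀ ⦃X' : C⦄ (g : X ⟶ X'),
    ∃ (Y' : C) (i' : X' ⟶ Y') (g' : Y ⟶ Y'), (∃ (Z' : C) (d' : Y' ⟶ Z'), ses i' d') ∧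
      IsPushout i g g' i'

variable {C : Type u} [Category.{v} C] [Preadditive C] [HasBinaryBiproducts C]

/-- `i` is an inflation (admissible monomorphism). -/
def ExactStructure.Inflation (E : ExactStructure C) {X Y : C} (i : X ⟶ Y) : Prop :=
  ∃ (Z : C) (d : Y ⟶ Z), E.ses i d

/-- `d` is a deflation (admissible epimorphism). -/
def ExactStructure.Deflation (E : ExactStructure C) {Y Z : C} (d : Y ⟶ Z) : Prop :=
  ∃ (X : C) (i : X ⟶ Y), E.ses i d

/-- `Ext^1(X, Y) = 0`: every short exact sequence `Y ↣ M ↠ X` splits. -/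
def ExactStructure.Ext1Zero (E : ExactStructure C) (X Y : C) : Prop :=
  ∀ ⦃M : C⦄ (i : Y ⟶ M) (d : M ⟶ X), E.ses i d → ∃ r : M ⟶ Y, i ≫ r = 𝟙 Y

/-- `P` is projective with respect to the exact structure. -/
def ExactStructure.Proj (E : ExactStructure C) (P : C) : Prop :=
  ∀ ⦃Y Z : C⦄ (d : Y ⟶ Z), E.Deflation d → ∀ g : P ⟶ Z, ∃ h : P ⟶ Y, h ≫ d = g

/-- `I` is injective with respect to the exact structure. -/
def ExactStructure.Inj (E : ExactStructure C) (I : C) : Prop :=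
  ∀ ⦃X Y : C⦄ (i : X ⟶ Y), E.Inflation i → ∀ g : X ⟶ I, ∃ h : Y ⟶ I, i ≫ h = g

def ExactStructure.EnoughProj (E : ExactStructure C) : Prop :=
  ∀ X : C, ∃ (P : C) (p : P ⟶ X), E.Proj P ∧ E.Deflation p

def ExactStructure.EnoughInj (E : ExactStructure C) : Prop :=
  ∀ X : C, ∃ (I : C) (i : X ⟶ I), E.Inj I ∧ E.Inflation i

/-- A class of objects is closed under direct summands (retracts). -/
def ClosedUnderSummands (U : Set C) : Prop :=
  ∀ ⦃X Y : C⦄ (s : Y ⟶ X) (r : X ⟶ Y), s ≫ r = 𝟙 Y → X ∈ U → Y ∈ U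

/-- A cotorsion pair `(U, V)` on an exact category. -/
structure IsCotorsionPair (E : ExactStructure C) (U V : Set C) : Prop where
  ext1 : ∀ ⦃A B : C⦄, A ∈ U → B ∈ V → E.Ext1Zero A B
  approx_left : ∀ B : C, ∃ (VB UB : C) (i : VB ⟶ UB) (d : UB ⟶ B),
    VB ∈ V ∧ UB ∈ U ∧ E.ses i d
  approx_right : ∀ B : C, ∃ (VB UB : C) (i : B ⟶ VB) (d : VB ⟶ UB),
    VB ∈ V ∧ UB ∈ U ∧ E.ses i d
  summands_left : ClosedUnderSummands U
  summands_right : ClosedUnderSummands V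

/-- The subcategory `B⁺` of a twin cotorsion pair, where `W = T ∩ U`. -/
def BPlus (E : ExactStructure C) (V W : Set C) : Set C :=
  fun B => ∃ (V' W' : C) (i : V' ⟶ W') (d : W' ⟶ B), V' ∈ V ∧ W' ∈ W ∧ E.ses i d

/-- The subcategory `B⁻` of a twin cotorsion pair, where `W = T ∩ U`. -/
def BMinus (E : ExactStructure C) (W S : Set C) : Set C :=
  fun B => ∃ (W' S' : C) (i : B ⟶ W') (d : W' ⟶ S'), W' ∈ W ∧ S' ∈ S ∧ E.ses i d

/-- `f` factors through an object of `W`. -/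
def FactorsThru (W : Set C) {X Y : C} (f : X ⟶ Y) : Prop :=
  ∃ (Z : C) (u : X ⟶ Z) (v : Z ⟶ Y), Z ∈ W ∧ u ≫ v = f

namespace ExactStructure

omit [HasBinaryBiproducts C]

variable (E : ExactStructure C) {X Y Z X' Y' Z' : C}

theorem epi_of_ses {i : X ⟶ Y} {d : Y ⟶ Z} (h : E.ses i d) : Epi d where
  left_cancellation a b hab := sub_eq_zero.mp <| (E.is_cokernel h 0 Limits.comp_zero).unique
    (by rw [Preadditive.comp_sub, hab, sub_self]) Limits.comp_zero

theorem mono_of_ses {i : X ⟶ Y} {d : Y ⟶ Z} (h : E.ses i d) : Mono i where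
  right_cancellation a b hab := sub_eq_zero.mp <|
    (E.is_kernel h 0 zero_comp).unique (by rw [Preadditive.sub_comp, hab, sub_self]) zero_comp

theorem exists_section_of_retraction {i : X ⟶ Y} {d : Y ⟶ Z} (h : E.ses i d) {r : Y ⟶ X}
    (hr : i ≫ r = 𝟙 X) : ∃ σ : Z ⟶ Y, σ ≫ d = 𝟙 Z := by
  have hi : i ≫ (𝟙 Y - r ≫ i) = 0 := by
    rw [Preadditive.comp_sub, Category.comp_id, ← Category.assoc, hr, Category.id_comp, sub_self]
  obtain ⟨σ, hσ, -⟩ := E.is_cokernel h _ hi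
  refine ⟨σ, (E.epi_of_ses h).left_cancellation _ _ ?_⟩
  rw [← Category.assoc, hσ, Preadditive.sub_comp, Category.assoc, E.comp_zero h,
    Limits.comp_zero, Category.id_comp, sub_zero, Category.comp_id]

/- Conflations are not assumed closed under isomorphism, so `Ext¹`-vanishing is transported along
push-outs and pull-backs through this retract and closure under summands. -/
theorem nonempty_retract_of_isPushout {i : X ⟶ Y} {d : Y ⟶ Z} {u : X ⟶ X'} {u' : Y ⟶ Y'}
    {i' : X' ⟶ Y'} {d' : Y' ⟶ Z'} (h : E.ses i d) (h' : E.ses i' d')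
    (hPO : IsPushout i u u' i') : Nonempty (Retract Z' Z) := by
  have hw : i ≫ d = u ≫ 0 := by rw [E.comp_zero h, Limits.comp_zero]
  let t := hPO.desc d 0 hw
  obtain ⟨s, hs, -⟩ := E.is_cokernel h' t (hPO.inr_desc _ _ _)
  have hk : i ≫ u' ≫ d' = 0 := by
    rw [← Category.assoc, hPO.w, Category.assoc, E.comp_zero h', Limits.comp_zero]
  obtain ⟨r, hr, -⟩ := E.is_cokernel h _ hk
  have htr : t ≫ r = d' := hPO.hom_ext
    (by rw [← Category.assoc, hPO.inl_desc, hr])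
    (by rw [← Category.assoc, hPO.inr_desc, zero_comp, E.comp_zero h'])
  refine ⟨⟨s, r, (E.epi_of_ses h').left_cancellation _ _ ?_⟩⟩
  rw [← Category.assoc, hs, htr, Category.comp_id]

theorem nonempty_retract_of_isPullback {i : X ⟶ Y} {d : Y ⟶ Z} {q : Z' ⟶ Z} {q' : Y' ⟶ Y}
    {i' : X' ⟶ Y'} {d' : Y' ⟶ Z'} (h : E.ses i d) (h' : E.ses i' d')
    (hPB : IsPullback d' q' q d) : Nonempty (Retract X' X) := by
  have hw : 0 ≫ q = i ≫ d := by rw [E.comp_zero h, zero_comp]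
  let t := hPB.lift 0 i hw
  obtain ⟨s, hs, -⟩ := E.is_kernel h (i' ≫ q')
    (by rw [Category.assoc, ← hPB.w, ← Category.assoc, E.comp_zero h', zero_comp])
  obtain ⟨r, hr, -⟩ := E.is_kernel h' t (hPB.lift_fst _ _ _)
  have hst : s ≫ t = i' := hPB.hom_ext
    (by rw [Category.assoc, hPB.lift_fst, Limits.comp_zero, E.comp_zero h'])
    (by rw [Category.assoc, hPB.lift_snd, hs])
  refine ⟨⟨s, r, (E.mono_of_ses h').right_cancellation _ _ ?_⟩⟩
  rw [Category.assoc, hr, hst, Category.id_comp]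

end ExactStructure

namespace IsCotorsionPair

omit [HasBinaryBiproducts C]

variable {E : ExactStructure C} {X Y Z X' Y' Z' : C}

theorem exists_extension_along_inflation {S T : Set C} (hST : IsCotorsionPair E S T)
    {i : X ⟶ Y} {d : Y ⟶ Z} (h : E.ses i d) (hZ : Z ∈ S) (u : X ⟶ X') (hX' : X' ∈ T) :
    ∃ e : Y ⟶ X', i ≫ e = u := by
  obtain ⟨M, i', u', ⟨Z', d', h'⟩, hPO⟩ := E.pushout_infl h u
  obtain ⟨R⟩ := E.nonempty_retract_of_isPushout h h' hPO
  obtain ⟨r, hr⟩ := hST.ext1 (hST.summands_left R.i R.r R.retract hZ) hX' i' d' h'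
  exact ⟨u' ≫ r, by rw [← Category.assoc, hPO.w, Category.assoc, hr, Category.comp_id]⟩

theorem exists_lift_along_deflation {U V : Set C} (hUV : IsCotorsionPair E U V)
    {i : X ⟶ Y} {d : Y ⟶ Z} (h : E.ses i d) (hX : X ∈ V) (q : Z' ⟶ Z) (hZ' : Z' ∈ U) :
    ∃ l : Z' ⟶ Y, l ≫ d = q := by
  obtain ⟨P, d', q', ⟨K, i', h'⟩, hPB⟩ := E.pullback_defl h q
  obtain ⟨R⟩ := E.nonempty_retract_of_isPullback h h' hPB
  obtain ⟨r, hr⟩ := hUV.ext1 hZ' (hUV.summands_right R.i R.r R.retract hX) i' d' h'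
  obtain ⟨σ, hσ⟩ := E.exists_section_of_retraction h' hr
  exact ⟨σ ≫ q', by rw [Category.assoc, ← hPB.w, ← Category.assoc, hσ, Category.id_comp]⟩

end IsCotorsionPair

theorem cokernel_construction_universal_property_general
    (E : ExactStructure C)
    {S T U V : Set C} (hST : IsCotorsionPair E S T) (hUV : IsCotorsionPair E U V)
    (hSU : S ⊆ U)
    {A B WA SA Cf : C} (f : A ⟶ B)
    (wA : A ⟶ WA) (sA : WA ⟶ SA) (hses1 : E.ses wA sA)
    (hSA : SA ∈ S)
    (g' : WA ⟶ Cf) (cf : B ⟶ Cf) (s : Cf ⟶ SA)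
    (hses2 : E.ses cf s) (hPO : IsPushout wA f g' cf)
    (D : C) (gm : B ⟶ D) (hgf : FactorsThru (T ∩ U) (f ≫ gm)) :
    (∃ c : Cf ⟶ D, cf ≫ c = gm) ∧
    (D ∈ BPlus E V (T ∩ U) → ∀ c c' : Cf ⟶ D, cf ≫ c = gm → cf ≫ c' = gm →
      FactorsThru (T ∩ U) (c - c')) := by
  refine ⟨?_, ?_⟩
  · obtain ⟨Z, u, v, hZ, huv⟩ := hgf
    obtain ⟨e, he⟩ := hST.exists_extension_along_inflation hses1 hSA u hZ.1
    exact ⟨hPO.desc (e ≫ v) gm (by rw [← Category.assoc, he, huv]), hPO.inr_desc _ _ _⟩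
  · rintro ⟨V', W', i, d, hV', hW', hses⟩ c c' hc hc'
    obtain ⟨q, hq, -⟩ :=
      E.is_cokernel hses2 (c - c') (by rw [Preadditive.comp_sub, hc, hc', sub_self])
    obtain ⟨l, hl⟩ := hUV.exists_lift_along_deflation hses hV' q (hSU hSA)
    exact ⟨W', s ≫ l, d, hW', by rw [Category.assoc, hl, hq]⟩

/-- for `f : A → B` with `A ∈ B⁻` and `c_f : B → C_f` the push-out of `f`
along `A ↣ W^A`, any `g : B → C` with `g∘f` factoring through `W` factors as `g = c∘c_f`;
and `c` is unique modulo `W` whenever `C ∈ B⁺`. -/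
theorem cokernel_construction_universal_property
    (E : ExactStructure C) (hP : E.EnoughProj) (hI : E.EnoughInj)
    {S T U V : Set C} (hST : IsCotorsionPair E S T) (hUV : IsCotorsionPair E U V)
    (hSU : S ⊆ U)
    {A B WA SA Cf : C} (f : A ⟶ B)
    (wA : A ⟶ WA) (sA : WA ⟶ SA) (hses1 : E.ses wA sA)
    (hWA : WA ∈ T ∩ U) (hSA : SA ∈ S)
    (g' : WA ⟶ Cf) (cf : B ⟶ Cf) (s : Cf ⟶ SA)
    (hses2 : E.ses cf s) (hPO : IsPushout wA f g' cf)
    (D : C) (gm : B ⟶ D) (hgf : FactorsThru (T ∩ U) (f ≫ gm)) :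
    (∃ c : Cf ⟶ D, cf ≫ c = gm) ∧
    (D ∈ BPlus E V (T ∩ U) → ∀ c c' : Cf ⟶ D, cf ≫ c = gm → cf ≫ c' = gm →
      FactorsThru (T ∩ U) (c - c')) :=
  cokernel_construction_universal_property_general E hST hUV hSU f wA sA hses1 hSA g' cf s hses2 hPO
    D gm hgf
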